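/- Let M N : ℕ, let p : Fin M → Fin N → ℝ be parameter vectors, let L : (Fin M → Fin N) → ℝ be a loss function, and fix i : Fin M and a : Fin N with p i a ≠ 0. Define F : ℝ → ℝ by F(t) = ∑ over all j : Fin M → Fin N of L(j) · ∏ over m : Fin M of q m (j m), where q = Function.update p i (Function.update (p i) a t) (i.e. the family p with its (i,a)-entry replaced by t). Then F has derivative at the point t = p i a equal to ∑ over all j : Fin M → Fin N of L(j) · (∏ over m of p m (j m)) · (if j i = a then (p i a)⁻¹ else 0). -/

import Mathlib

/-! Only the factor `p i (j i)` of the weight `∏ m, p m (j m)` depends on the entry `p i a`, and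
it does so exactly when `j i = a`. Hence each summand is affine in that entry, with slope the
product of the remaining factors, which is the weight divided by `p i a`. -/

open Finset Function

theorem Finset.prod_erase_eq_prod_mul_inv₀ {ι K : Type*} [DecidableEq ι] [CommGroupWithZero K]
    {s : Finset ι} {f : ι → K} {i : ι} (hi : i ∈ s) (hfi : f i ≠ 0) :
    ∏ m ∈ s.erase i, f m = (∏ m ∈ s, f m) * (f i)⁻¹ := by
  rw [← prod_erase_mul s f hi, mul_inv_cancel_right₀ hfi]

section

variable {ι α : Type*} [Fintype ι] [DecidableEq ι]

theorem prod_apply_update_eq_mul_prod_erase {M : Type*} [CommMonoid M] (p : ι → α → M)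
    (j : ι → α) (i : ι) (q : α → M) :
    ∏ m, update p i q m (j m) = q (j i) * ∏ m ∈ univ.erase i, p m (j m) := by
  simp_rw [apply_update (fun m (f : α → M) => f (j m)), prod_update_of_mem (mem_univ i),
    sdiff_singleton_eq_erase]

theorem hasDerivAt_prod_apply_update_update [Fintype α] [DecidableEq α] (p : ι → α → ℝ)
    (j : ι → α) (i : ι) (a : α) (t : ℝ) :
    HasDerivAt (fun t => ∏ m, update p i (update (p i) a t) m (j m))
      (if j i = a then ∏ m ∈ univ.erase i, p m (j m) else 0) t := by
  simp_rw [prod_apply_update_eq_mul_prod_erase]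
  have hentry := hasDerivAt_pi.1 (hasDerivAt_update (p i) a t) (j i)
  refine (hentry.mul_const (∏ m ∈ univ.erase i, p m (j m))).congr_deriv ?_
  rw [Pi.single_apply, ite_mul, one_mul, zero_mul]

end

theorem stmt_6 (M N : ℕ) (p : Fin M → Fin N → ℝ)
    (L : (Fin M → Fin N) → ℝ) (i : Fin M) (a : Fin N) (hpa : p i a ≠ 0) :
    HasDerivAt
      (fun t : ℝ => ∑ j : Fin M → Fin N,
        L j * ∏ m, (Function.update p i (Function.update (p i) a t)) m (j m))
      (∑ j : Fin M → Fin N,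
        L j * (∏ m, p m (j m)) * (if j i = a then (p i a)⁻¹ else 0))
      (p i a) := by
  refine HasDerivAt.fun_sum fun j _ => ?_
  refine ((hasDerivAt_prod_apply_update_update p j i a (p i a)).const_mul (L j)).congr_deriv ?_
  split_ifs with hja
  · rw [prod_erase_eq_prod_mul_inv₀ (mem_univ i) (hja ▸ hpa : p i (j i) ≠ 0), hja, mul_assoc]
  · simp
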